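/- Let R be a fusion ring with basis B faithfully graded by an abelian group G via surjective λ : B → G, and suppose B is generated by elements X₁, …, Xₙ. Then the exponent of G divides the least common multiple of the orders of X₁, …, Xₙ. In particular, if B is generated by self-dual elements, then G is an elementary abelian 2-group. -/

import Mathlib

open Finset

structure FusionData (B : Type) [Fintype B] [DecidableEq B] where
  one : B
  star : B → B
  N : B → B → B → ℕ
  N_one_left : ∀ X Y : B, N one X Y = if Y = X then 1 else 0
  N_one_right : ∀ X Y : B, N X one Y = if Y = X then 1 else 0
  mult_one : ∀ X Y : B, N X Y one = if Y = star X then 1 else 0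
  star_involutive : ∀ X : B, star (star X) = X
  assoc : ∀ X Y Z W : B, ∑ T : B, N X Y T * N T Z W = ∑ T : B, N Y Z T * N X T W
  frob : ∀ X Y Z : B, N X Y Z = N (star X) Z Y

variable {B : Type} [Fintype B] [DecidableEq B]

/-- Multiplicity of `Y` in the `n`-th tensor power of `X`. -/
def FusionData.powMult (F : FusionData B) (X : B) : ℕ → B → ℕ
  | 0, Y => if Y = F.one then 1 else 0
  | n + 1, Y => ∑ Z : B, F.powMult X n Z * F.N Z X Y

/-- The order of a basis element: least `n ≥ 1` with `1` appearing in `Xⁿ`. -/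
noncomputable def FusionData.ord (F : FusionData B) (X : B) : ℕ :=
  sInf {n : ℕ | 1 ≤ n ∧ 0 < F.powMult X n F.one}

/-- `X` is faithful: every basis element appears in some power of `X`. -/
def FusionData.Faithful (F : FusionData B) (X : B) : Prop :=
  ∀ Y : B, ∃ n : ℕ, 1 ≤ n ∧ 0 < F.powMult X n Y

/-- Multiplicity of `Y` in the product of a list of basis elements. -/
def FusionData.prodMult (F : FusionData B) : List B → B → ℕ
  | [], Y => if Y = F.one then 1 else 0
  | X :: l, Y => ∑ Z : B, F.N X Z Y * FusionData.prodMult F l Z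

/-- A grading of the fusion ring by a group `G`. -/
def FusionData.IsGrading (F : FusionData B) {G : Type} [Group G] (lam : B → G) : Prop :=
  (∀ X : B, lam (F.star X) = (lam X)⁻¹) ∧
  (∀ X Y Z : B, 0 < F.N X Y Z → lam Z = lam X * lam Y)

/-!
A grading is multiplicative on nonzero fusion coefficients, so every basis element occurring in
a product `X₁ ⋯ Xₖ` has degree `λ X₁ ⋯ λ Xₖ`; in particular `λ X ^ ord X = λ 1 = 1`. Since the
generators' products exhaust `B` and `λ` is onto, `G` is generated by the `λ X` with `X ∈ S`,
and in an abelian group an exponent shared by the generators is shared by all elements.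
A self-dual `X` has `1 ∈ X ⊗ X`, so `λ X ^ 2 = 1`.
-/

namespace FusionData.IsGrading

variable {G : Type} {F : FusionData B} {lam : B → G}

section Group

variable [Group G]

theorem map_one (hgr : F.IsGrading lam) : lam F.one = 1 := by
  have h : lam F.one = lam F.one * lam F.one := hgr.2 _ _ _ (by simp [F.N_one_left])
  exact left_eq_mul.mp h

theorem map_eq_pow_of_powMult_pos (hgr : F.IsGrading lam) (X : B) :
    ∀ (n : ℕ) (Y : B), 0 < F.powMult X n Y → lam Y = lam X ^ n
  | 0, Y, h => by
    have hY : Y = F.one := by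
      by_contra hY
      simp [FusionData.powMult, hY] at h
    rw [hY, hgr.map_one, pow_zero]
  | n + 1, Y, h => by
    obtain ⟨Z, -, hZ⟩ := Finset.sum_pos_iff.mp h
    obtain ⟨hXZ, hZY⟩ := CanonicallyOrderedAdd.mul_pos.mp hZ
    rw [hgr.2 _ _ _ hZY, map_eq_pow_of_powMult_pos hgr X n Z hXZ, pow_succ]

theorem map_pow_ord (hgr : F.IsGrading lam) (X : B) : lam X ^ F.ord X = 1 := by
  by_cases hne : {n : ℕ | 1 ≤ n ∧ 0 < F.powMult X n F.one}.Nonempty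
  · rw [FusionData.ord, ← hgr.map_eq_pow_of_powMult_pos X _ _ (Nat.sInf_mem hne).2,
      hgr.map_one]
  · -- `ord X` is then `sInf ∅ = 0`
    rw [Set.not_nonempty_iff_eq_empty] at hne
    simp [FusionData.ord, hne]

theorem map_eq_prod_of_prodMult_pos (hgr : F.IsGrading lam) :
    ∀ (l : List B) (Y : B), 0 < F.prodMult l Y → lam Y = (l.map lam).prod
  | [], Y, h => by
    have hY : Y = F.one := by
      by_contra hY
      simp [FusionData.prodMult, hY] at h
    rw [hY, hgr.map_one, List.map_nil, List.prod_nil]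
  | X :: l, Y, h => by
    obtain ⟨Z, -, hZ⟩ := Finset.sum_pos_iff.mp h
    obtain ⟨hXZ, hZY⟩ := CanonicallyOrderedAdd.mul_pos.mp hZ
    rw [hgr.2 _ _ _ hXZ, map_eq_prod_of_prodMult_pos hgr l Z hZY, List.map_cons, List.prod_cons]

theorem map_sq_eq_one_of_star_eq (hgr : F.IsGrading lam) {X : B} (hX : F.star X = X) :
    lam X ^ 2 = 1 := by
  have h : lam F.one = lam X * lam X := hgr.2 _ _ _ (by simp [F.mult_one, hX])
  rw [pow_two, ← h, hgr.map_one]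

end Group

theorem pow_eq_one_of_generates [CommGroup G] (hgr : F.IsGrading lam)
    (hsurj : Function.Surjective lam) {S : Finset B}
    (hgen : ∀ Y : B, ∃ l : List B, (∀ x ∈ l, x ∈ S) ∧ 0 < F.prodMult l Y)
    (n : ℕ) (hS : ∀ X ∈ S, lam X ^ n = 1) (g : G) : g ^ n = 1 := by
  obtain ⟨Y, rfl⟩ := hsurj g
  obtain ⟨l, hlS, hpos⟩ := hgen Y
  rw [hgr.map_eq_prod_of_prodMult_pos l Y hpos]
  refine List.prod_induction (· ^ n = 1) (fun a b ha hb => by rw [mul_pow, ha, hb, one_mul])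
    (one_pow n) fun x hx => ?_
  obtain ⟨X, hXl, rfl⟩ := List.mem_map.mp hx
  exact hS X (hlS X hXl)

end FusionData.IsGrading

/-- the exponent of the (abelian) grading group divides the lcm of the
orders of generating basis elements; in particular, generation by self-dual elements
forces an elementary abelian 2-group. -/
theorem exponent_dvd_lcm_orders {G : Type} [CommGroup G] (F : FusionData B)
    (lam : B → G) (hgr : F.IsGrading lam) (hsurj : Function.Surjective lam)
    (S : Finset B)
    (hgen : ∀ Y : B, ∃ l : List B, l ≠ [] ∧ (∀ x ∈ l, x ∈ S) ∧ 0 < F.prodMult l Y) :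
    Monoid.exponent G ∣ S.lcm F.ord ∧
      ((∀ X ∈ S, F.star X = X) → ∀ g : G, g ^ 2 = 1) := by
  have hexp := hgr.pow_eq_one_of_generates hsurj fun Y => (hgen Y).imp fun _ => And.right
  refine ⟨Monoid.exponent_dvd_of_forall_pow_eq_one (hexp _ fun X hX => ?_),
    fun hsd => hexp 2 fun X hX => hgr.map_sq_eq_one_of_star_eq (hsd X hX)⟩
  obtain ⟨c, hc⟩ := Finset.dvd_lcm (f := F.ord) hX
  rw [hc, pow_mul, hgr.map_pow_ord X, one_pow]
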